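/- arXiv:0709.2055 — 2 statements merged into one kernel-verified Lean document; each statement's English description precedes it below -/
import Mathlib

section
/- Greedy construction of separated codes: let p, b, δ, N be positive integers. If (N-1)·p·C(p,δ)·(b-1)^{p-δ} < b^p and p < δ(b-1), then there exist N functions f_1, …, f_N : {1,…,p} → {1,…,b} such that for all i ≠ j, #{k : f_i(k) = f_j(k)} < δ. -/
/-!
Greedy construction. A function `f` agreeing with `g` exactly on a set `T` of `j` positions has
one choice at each position of `T` and `b - 1` choices elsewhere, so at most
`∑_{j ≥ δ} C(p, j) (b - 1)^(p - j)` functions agree with `g` in at least `δ` places. When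
`p < δ (b - 1)` the terms of this sum decrease in `j`, so it is at most
`p C(p, δ) (b - 1)^(p - δ)`.
Hence `N - 1` functions exclude fewer than `b ^ p` functions, and a new one can always be added.
-/

open Finset

theorem choose_mul_pow_sub_antitoneOn {p m δ : ℕ} (h : p - δ ≤ (δ + 1) * m) :
    AntitoneOn (fun j => p.choose j * m ^ (p - j)) (Set.Ici δ) := by
  refine antitoneOn_nat_Ici_of_succ_le fun j hj => ?_
  -- consecutive terms have ratio `(p - j) / ((j + 1) m) ≤ 1`
  rcases lt_or_ge j p with hjp | hjp
  · have hstep : p.choose (j + 1) ≤ p.choose j * m := by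
      refine Nat.le_of_mul_le_mul_right ?_ j.succ_pos
      calc p.choose (j + 1) * (j + 1) = p.choose j * (p - j) := p.choose_succ_right_eq j
        _ ≤ p.choose j * ((j + 1) * m) := by
          gcongr
          exact (Nat.sub_le_sub_left hj p).trans (h.trans (by gcongr))
        _ = p.choose j * m * (j + 1) := by ring
    calc p.choose (j + 1) * m ^ (p - (j + 1)) ≤ p.choose j * m * m ^ (p - (j + 1)) := by gcongr
      _ = p.choose j * m ^ (p - j) := by
        rw [mul_assoc, ← pow_succ', Nat.sub_add_eq, Nat.sub_add_cancel (Nat.sub_pos_of_lt hjp)]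
  · simp [Nat.choose_eq_zero_of_lt (Nat.lt_succ_of_le hjp)]

section Agreement

variable {ι β : Type*} [Fintype ι] [DecidableEq ι] [Fintype β] [DecidableEq β]

theorem card_filter_agreeSet_eq (g : ι → β) (T : Finset ι) :
    #{f : ι → β | ({i | f i = g i} : Finset ι) = T} =
      (Fintype.card β - 1) ^ (Fintype.card ι - #T) := by
  have hfilter : ({f : ι → β | ({i | f i = g i} : Finset ι) = T} : Finset (ι → β)) =
      Fintype.piFinset fun i => if i ∈ T then {g i} else univ.erase (g i) := by
    ext f
    simp only [mem_filter, mem_univ, true_and, Fintype.mem_piFinset, Finset.ext_iff]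
    refine forall_congr' fun i => ?_
    split_ifs <;> simp [*]
  simp only [hfilter, Fintype.card_piFinset, apply_ite card, card_singleton, prod_ite,
    prod_const_one, one_mul, prod_const, card_erase_of_mem (mem_univ _), card_univ,
    filter_notMem_eq_sdiff, card_univ_sdiff, filter_mem_eq_inter, univ_inter]

theorem card_filter_card_agreeSet_eq (g : ι → β) (j : ℕ) :
    #{f : ι → β | #{i | f i = g i} = j} =
      (Fintype.card ι).choose j * (Fintype.card β - 1) ^ (Fintype.card ι - j) := by
  have hmaps : ∀ f ∈ ({f : ι → β | #{i | f i = g i} = j} : Finset _),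
      ({i | f i = g i} : Finset ι) ∈ powersetCard j univ := by
    intro f hf
    simpa using hf
  rw [card_eq_sum_card_fiberwise hmaps]
  calc ∑ T ∈ powersetCard j univ, #{f ∈ ({f : ι → β | #{i | f i = g i} = j} : Finset _) |
        ({i | f i = g i} : Finset ι) = T}
      = ∑ T ∈ powersetCard j univ, (Fintype.card β - 1) ^ (Fintype.card ι - j) := by
        refine sum_congr rfl fun T hT => ?_
        rw [← (mem_powersetCard_univ.1 hT), ← card_filter_agreeSet_eq g T, filter_filter]
        congr 1
        ext f
        simp only [mem_filter, mem_univ, true_and, and_iff_right_iff_imp]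
        rintro rfl
        rfl
    _ = _ := by simp

theorem card_filter_le_card_agreeSet_eq (g : ι → β) (δ : ℕ) :
    #{f : ι → β | δ ≤ #{i | f i = g i}} = ∑ j ∈ Icc δ (Fintype.card ι),
      (Fintype.card ι).choose j * (Fintype.card β - 1) ^ (Fintype.card ι - j) := by
  have hmaps : ∀ f ∈ ({f : ι → β | δ ≤ #{i | f i = g i}} : Finset _),
      #{i | f i = g i} ∈ Icc δ (Fintype.card ι) := by
    intro f hf
    rw [mem_filter] at hf
    exact mem_Icc.2 ⟨hf.2, card_le_univ _⟩
  rw [card_eq_sum_card_fiberwise hmaps]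
  refine sum_congr rfl fun j hj => ?_
  rw [← card_filter_card_agreeSet_eq g j, filter_filter]
  congr 1
  ext f
  simp only [mem_filter, mem_univ, true_and, and_iff_right_iff_imp]
  rintro rfl
  exact (mem_Icc.1 hj).1

theorem card_filter_le_card_agreeSet_le {δ : ℕ} (hδ : 0 < δ)
    (h : Fintype.card ι - δ ≤ (δ + 1) * (Fintype.card β - 1)) (g : ι → β) :
    #{f : ι → β | δ ≤ #{i | f i = g i}} ≤
      Fintype.card ι * (Fintype.card ι).choose δ *
        (Fintype.card β - 1) ^ (Fintype.card ι - δ) := by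
  set p := Fintype.card ι
  have hanti := choose_mul_pow_sub_antitoneOn h
  rw [card_filter_le_card_agreeSet_eq, mul_assoc]
  calc _ ≤ #(Icc δ p) • (p.choose δ * (Fintype.card β - 1) ^ (p - δ)) :=
        sum_le_card_nsmul _ _ _ fun j hj =>
          hanti Set.self_mem_Ici (Set.mem_Ici.2 (mem_Icc.1 hj).1) (mem_Icc.1 hj).1
    _ ≤ _ := by
      rw [Nat.card_Icc, smul_eq_mul]
      gcongr
      omega

end Agreement

theorem Pairwise.fin_cons {α : Type*} {r : α → α → Prop} {n : ℕ} {f : Fin n → α}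
    (hf : Pairwise fun i j => r (f i) (f j)) {a : α} (ha : ∀ i, r a (f i))
    (ha' : ∀ i, r (f i) a) :
    Pairwise fun i j =>
      r (Fin.cons (α := fun _ => α) a f i) (Fin.cons (α := fun _ => α) a f j) := by
  intro i j hij
  cases i using Fin.cases <;> cases j using Fin.cases
  · exact absurd rfl hij
  · exact ha _
  · exact ha' _
  · exact hf (ne_of_apply_ne Fin.succ hij)

theorem exists_pairwise_not_rel_of_card_mul_lt {X : Type*} [Fintype X] [DecidableEq X]
    (r : X → X → Prop) [DecidableRel r] [Std.Symm r] {B : ℕ}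
    (hB : ∀ x, #{y | r y x} ≤ B) :
    ∀ {N : ℕ}, (N - 1) * B < Fintype.card X →
      ∃ f : Fin N → X, Pairwise fun i j => ¬ r (f i) (f j)
  | 0, _ => ⟨Fin.elim0, fun i => i.elim0⟩
  | N + 1, hN => by
    obtain ⟨f, hf⟩ := exists_pairwise_not_rel_of_card_mul_lt r hB
      (N := N) (lt_of_le_of_lt (by gcongr; omega) hN)
    have hcover : #(univ.biUnion fun i => ({y | r y (f i)} : Finset X)) < #(univ : Finset X) :=
      calc _ ≤ #(univ : Finset (Fin N)) * B := card_biUnion_le_card_mul _ _ _ fun i _ => hB (f i)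
        _ < _ := by simpa using hN
    obtain ⟨a, -, ha⟩ := exists_mem_notMem_of_card_lt_card hcover
    have hfar : ∀ i, ¬ r a (f i) := fun i hi =>
      ha (mem_biUnion.2 ⟨i, mem_univ i, mem_filter.2 ⟨mem_univ a, hi⟩⟩)
    exact ⟨Fin.cons a f, Pairwise.fin_cons (r := fun x y => ¬ r x y) hf hfar
      fun i hi => hfar i (symm hi)⟩

theorem separated_code_exists_general
    (p b δ N : ℕ) (hδ : 0 < δ)
    (hcount : (N - 1) * (p * p.choose δ * (b - 1) ^ (p - δ)) < b ^ p)
    (hratio : p < δ * (b - 1)) :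
    ∃ f : Fin N → (Fin p → Fin b), ∀ i j : Fin N, i ≠ j →
      (Finset.univ.filter (fun k => f i k = f j k)).card < δ := by
  let close : (Fin p → Fin b) → (Fin p → Fin b) → Prop := fun f g => δ ≤ #{k | f k = g k}
  have : Std.Symm close := ⟨fun f g h => by simpa only [close, eq_comm] using h⟩
  have hball (g : Fin p → Fin b) : #{f | close f g} ≤ p * p.choose δ * (b - 1) ^ (p - δ) := by
    simpa using card_filter_le_card_agreeSet_le hδ
      (by simpa using (Nat.sub_le p δ).trans (hratio.le.trans (by gcongr; omega))) g
  obtain ⟨f, hf⟩ := exists_pairwise_not_rel_of_card_mul_lt close hball (by simpa using hcount)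
  exact ⟨f, fun i j hij => not_le.1 (hf hij)⟩

/-- Greedy construction of separated codes: if
`(N-1)·p·C(p,δ)·(b-1)^{p-δ} < b^p` and `p < δ(b-1)`, then there exist `N` functions
`f_1, …, f_N : Fin p → Fin b` that pairwise agree in fewer than `δ` places. -/
theorem separated_code_exists
    (p b δ N : ℕ) (hp : 0 < p) (hb : 0 < b) (hδ : 0 < δ) (hδp : δ ≤ p) (hN : 0 < N)
    (hcount : (N - 1) * (p * p.choose δ * (b - 1) ^ (p - δ)) < b ^ p)
    (hratio : p < δ * (b - 1)) :
    ∃ f : Fin N → (Fin p → Fin b), ∀ i j : Fin N, i ≠ j →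
      (Finset.univ.filter (fun k => f i k = f j k)).card < δ :=
  separated_code_exists_general p b δ N hδ hcount hratio
end

section
/- An irrational rotation-type interval exchange shadowing estimate: let T be a minimal interval exchange transformation on [0,1] with discontinuity set D, P its natural partition into intervals of continuity, and x a point not on the orbit of any discontinuity. Then for every i there exist n_i → ∞ and d_i ∈ D and a side ± such that for all 0 ≤ k ≤ n_i, the points T^{-n_i + k} x and T^k d_i^± lie in the same element of P; hence the P-name of x is shadowed by the one-sided itineraries of the discontinuities. -/
/-- Two points are in the same element of the natural partition of a minimal interval
exchange: no discontinuity lies (weakly) between them. -/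
def SameP (D : Finset ℝ) (a b : ℝ) : Prop :=
  ∀ d ∈ D, d ≤ min a b ∨ max a b < d

/-!
Write `u m = T⁻¹^[m] x` for the backward orbit of `x`. Since `T` is a translation on each
element of `P`, a point `y` closer to `z` than every `T^k z` with `k ≤ N` is to `D` moves
rigidly with `z` for `N` steps. Minimality and compactness force the backward orbit to come
arbitrarily close to `D` (otherwise two nearby points of a convergent subsequence would shadow
each other long enough for minimality to push one of them near `D`), so there are infinitely
many record times `N` at which `u N` is closer to `D` than every earlier `u m`. At such a time
the one-sided neighbourhood of the discontinuity `d` nearest to `u N`, on the side of `u N`,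
shadows `u N, …, u 0 = x`.
-/

open Metric Set Filter

lemma iterate_apply_of_apply_succ_eq {α : Type*} {T : α → α} {u : ℕ → α}
    (hu : ∀ m, T (u (m + 1)) = u m) {n k : ℕ} (hk : k ≤ n) : T^[k] (u n) = u (n - k) := by
  obtain ⟨m, rfl⟩ := Nat.exists_eq_add_of_le' hk
  rw [Nat.add_sub_cancel]
  clear hk
  induction k with
  | zero => rfl
  | succ k ih => rw [Function.iterate_succ_apply, ← add_assoc, hu, ih]

lemma Equiv.Perm.mapsTo_inv_of_image_eq {α : Type*} {T : Equiv.Perm α} {S : Set α}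
    (h : T '' S = S) : MapsTo (⇑T⁻¹) S S := fun a ha => by
  rwa [← h, Equiv.image_eq_preimage_symm] at ha

lemma Equiv.Perm.zpow_neg_natCast_apply {α : Type*} (T : Equiv.Perm α) (m : ℕ) (x : α) :
    (T ^ (-(m : ℤ))) x = (⇑T⁻¹)^[m] x := by
  rw [zpow_neg, zpow_natCast, ← inv_pow, ← Equiv.Perm.iterate_eq_pow]

lemma frequently_isMinOn_Iic {α : Type*} [LinearOrder α] {r : ℕ → α}
    (hr : ∀ N, ∃ m, r m < r N) : ∃ᶠ N in atTop, IsMinOn r (Iic N) N := by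
  classical
  rw [frequently_atTop]
  intro N
  obtain ⟨m₀, -, hm₀⟩ := (Finset.range (N + 1)).exists_min_image r Finset.nonempty_range_add_one
  have hex : ∃ M, r M < r m₀ := hr m₀
  have hM := Nat.find_spec hex
  refine ⟨Nat.find hex, ?_, isMinOn_iff.2 fun m hm => ?_⟩
  · by_contra! h
    exact (hm₀ _ (Finset.mem_range.2 (by omega))).not_gt hM
  · rcases (mem_Iic.1 hm).lt_or_eq with h | rfl
    · exact hM.le.trans (not_lt.1 (Nat.find_min hex h))
    · rfl

lemma SameP.of_dist_lt_infDist {D : Finset ℝ} {a b : ℝ} (h : dist a b < infDist a D) :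
    SameP D a b := by
  intro d hd
  by_contra! hc
  have hda : dist a d ≤ dist a b :=
    Real.dist_left_le_of_mem_uIcc ⟨hc.1.le, hc.2⟩
  linarith [infDist_le_dist_of_mem (x := a) (Finset.mem_coe.2 hd)]

lemma exists_side_mem_uIcc {z d : ℝ} (h : z ≠ d) : ∃ σ : Bool, ∀ y,
    (if σ then d < y ∧ y < d + dist z d else d - dist z d < y ∧ y < d) →
      y ∈ uIcc z d ∧ dist z y < dist z d := by
  rcases h.lt_or_gt with h | h
  · refine ⟨false, fun y hy => ?_⟩
    simp only [Bool.false_eq_true, if_false, Real.dist_eq, abs_of_neg (sub_neg.2 h)] at hy ⊢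
    refine ⟨uIcc_of_le h.le ▸ ⟨by linarith, hy.2.le⟩, ?_⟩
    rw [abs_lt]; constructor <;> linarith
  · refine ⟨true, fun y hy => ?_⟩
    simp only [if_true, Real.dist_eq, abs_of_pos (sub_pos.2 h)] at hy ⊢
    refine ⟨uIcc_of_ge h.le ▸ ⟨hy.1.le, by linarith⟩, ?_⟩
    rw [abs_lt]; constructor <;> linarith

def IsTranslationOnPieces (T : ℝ → ℝ) (S : Set ℝ) (D : Finset ℝ) : Prop :=
  ∀ a ∈ S, ∀ b ∈ S, SameP D a b → T b - T a = b - a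

namespace IsTranslationOnPieces

variable {T : ℝ → ℝ} {S : Set ℝ} {D : Finset ℝ}

lemma dist_eq (hT : IsTranslationOnPieces T S D) {a b : ℝ} (ha : a ∈ S) (hb : b ∈ S)
    (hab : SameP D a b) : dist (T a) (T b) = dist a b := by
  rw [dist_comm, Real.dist_eq, hT a ha b hb hab, ← Real.dist_eq, dist_comm]

lemma dist_iterate_eq (hT : IsTranslationOnPieces T S D) (hS : MapsTo T S S) {z b : ℝ}
    (hz : z ∈ S) (hb : b ∈ S) {N : ℕ} (hfar : ∀ k < N, dist z b < infDist (T^[k] z) D) :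
    ∀ k ≤ N, dist (T^[k] z) (T^[k] b) = dist z b := by
  intro k hk
  induction k with
  | zero => rfl
  | succ k ih =>
    have ih := ih (by omega)
    have hsame : SameP D (T^[k] z) (T^[k] b) :=
      .of_dist_lt_infDist (ih ▸ hfar k (by omega))
    rw [Function.iterate_succ_apply', Function.iterate_succ_apply',
      hT.dist_eq (hS.iterate k hz) (hS.iterate k hb) hsame, ih]

lemma sameP_iterate (hT : IsTranslationOnPieces T S D) (hS : MapsTo T S S) {z b : ℝ}
    (hz : z ∈ S) (hb : b ∈ S) {N : ℕ} (hfar : ∀ k ≤ N, dist z b < infDist (T^[k] z) D) :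
    ∀ k ≤ N, SameP D (T^[k] z) (T^[k] b) := fun k hk =>
  .of_dist_lt_infDist <| hT.dist_iterate_eq hS hz hb (fun j hj => hfar j hj.le) k hk ▸ hfar k hk

lemma exists_infDist_lt (hT : IsTranslationOnPieces T S D) (hS : MapsTo T S S)
    (hSb : Bornology.IsBounded S)
    (hmin : ∀ x ∈ S, ∀ y ∈ S, ∀ ε > (0 : ℝ), ∃ n : ℕ, |T^[n] x - y| < ε)
    {d₀ : ℝ} (hd₀ : d₀ ∈ D) (hd₀S : d₀ ∈ S) {u : ℕ → ℝ} (hu : ∀ m, u m ∈ S)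
    (hTu : ∀ m, T (u (m + 1)) = u m) {δ : ℝ} (hδ : 0 < δ) : ∃ m, infDist (u m) D < δ := by
  by_contra! hfar
  obtain ⟨q, -, φ, hφ, hlim⟩ := tendsto_subseq_of_bounded hSb hu
  obtain ⟨I, hI⟩ := Metric.cauchySeq_iff'.1 hlim.cauchySeq (δ / 2) (half_pos hδ)
  obtain ⟨j, hj⟩ := hmin _ (hu (φ I)) d₀ hd₀S (δ / 2) (half_pos hδ)
  set n := φ (max I j)
  have hjn : j ≤ n := (le_max_right I j).trans (hφ.id_le _)
  have hclose : dist (u n) (u (φ I)) < δ / 2 := hI _ (le_max_left I j)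
  have hdist := hT.dist_iterate_eq hS (hu n) (hu (φ I)) (N := j) (fun k hk => by
    rw [iterate_apply_of_apply_succ_eq hTu (by omega)]
    linarith [hfar (n - k)]) j le_rfl
  have hnear : infDist (T^[j] (u n)) D < δ := calc
    _ ≤ dist (T^[j] (u n)) d₀ := infDist_le_dist_of_mem hd₀
    _ ≤ dist (T^[j] (u n)) (T^[j] (u (φ I))) + dist (T^[j] (u (φ I))) d₀ := dist_triangle ..
    _ < δ / 2 + δ / 2 := by rw [hdist, Real.dist_eq _ d₀]; gcongr
    _ = δ := add_halves δ
  rw [iterate_apply_of_apply_succ_eq hTu hjn] at hnear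
  exact (hfar (n - j)).not_gt hnear

lemma sameP_of_isMinOn (hT : IsTranslationOnPieces T S D) (hS : MapsTo T S S) {u : ℕ → ℝ}
    (hu : ∀ m, u m ∈ S) (hTu : ∀ m, T (u (m + 1)) = u m) {N : ℕ}
    (hN : IsMinOn (fun m => infDist (u m) D) (Iic N) N) {y : ℝ} (hy : y ∈ S)
    (hyN : dist (u N) y < infDist (u N) D) {k : ℕ} (hk : k ≤ N) :
    SameP D (u (N - k)) (T^[k] y) := by
  rw [← iterate_apply_of_apply_succ_eq hTu hk]
  refine hT.sameP_iterate hS (hu N) hy (fun j hj => ?_) k hk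
  rw [iterate_apply_of_apply_succ_eq hTu hj]
  exact hyN.trans_le (isMinOn_iff.1 hN _ (mem_Iic.2 (N.sub_le j)))

lemma exists_one_sided_sameP (hT : IsTranslationOnPieces T S D) (hS : MapsTo T S S)
    (hSc : S.OrdConnected) (hDS : ∀ d ∈ D, d ∈ S) {u : ℕ → ℝ} (hu : ∀ m, u m ∈ S)
    (hTu : ∀ m, T (u (m + 1)) = u m) {N : ℕ}
    (hN : IsMinOn (fun m => infDist (u m) D) (Iic N) N) (hpos : 0 < infDist (u N) D) :
    ∃ d ∈ D, ∃ σ : Bool, ∀ k ≤ N, ∃ ε > (0 : ℝ), ∀ y : ℝ,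
      (if σ then d < y ∧ y < d + ε else d - ε < y ∧ y < d) → SameP D (u (N - k)) (T^[k] y) := by
  have hDne : (D : Set ℝ).Nonempty := by
    by_contra hD
    rw [not_nonempty_iff_eq_empty.1 hD, infDist_empty] at hpos
    exact hpos.false
  obtain ⟨d, hd, hdist⟩ := D.finite_toSet.isCompact.exists_infDist_eq_dist hDne (u N)
  obtain ⟨σ, hσ⟩ := exists_side_mem_uIcc (z := u N) (d := d) fun h =>
    hpos.ne' (by rw [hdist, h, dist_self])
  refine ⟨d, hd, σ, fun k hk => ⟨dist (u N) d, hdist ▸ hpos, fun y hy => ?_⟩⟩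
  obtain ⟨hyd, hyN⟩ := hσ y hy
  exact hT.sameP_of_isMinOn hS hu hTu hN (hSc.uIcc_subset (hu N) (hDS d hd) hyd)
    (hdist ▸ hyN) hk

end IsTranslationOnPieces

lemma nonempty_of_isTranslationOnPieces_Ico {T : ℝ → ℝ} {D : Finset ℝ}
    (hT : IsTranslationOnPieces T (Ico 0 1) D) (hrange : T '' Ico 0 1 = Ico 0 1)
    (hmin : ∀ x ∈ Ico (0 : ℝ) 1, ∀ y ∈ Ico (0 : ℝ) 1, ∀ ε > (0 : ℝ), ∃ n : ℕ, |T^[n] x - y| < ε) :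
    D.Nonempty := by
  rw [Finset.nonempty_iff_ne_empty]
  rintro rfl
  have h0 : (0 : ℝ) ∈ Ico (0 : ℝ) 1 := by norm_num
  obtain ⟨z, hz, hTz⟩ : (0 : ℝ) ∈ T '' Ico 0 1 := hrange.symm ▸ h0
  have hT0 : T 0 = 0 := by
    have htr := hT 0 h0 z hz fun d hd => absurd hd (Finset.notMem_empty d)
    have hT0S : T 0 ∈ Ico (0 : ℝ) 1 := hrange.subset (mem_image_of_mem T h0)
    linarith [hz.1, hT0S.1]
  obtain ⟨n, hn⟩ := hmin 0 h0 (1 / 2) (by norm_num) (1 / 2) (by norm_num)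
  rw [Function.iterate_fixed hT0] at hn
  norm_num at hn

/-- Shadowing for minimal interval exchanges: if `T` is a minimal interval exchange on
`[0,1)` with discontinuity set `D`, and `x` is not on the orbit of any discontinuity,
then there exist `n_i → ∞`, discontinuities `d_i ∈ D` and sides `±` such that for all
`0 ≤ k ≤ n_i`, `T^{-n_i+k} x` and `T^k d_i^±` lie in the same element of the natural
partition `P`; hence the `P`-name of `x` is shadowed by the one-sided itineraries of
the discontinuities. -/
theorem interval_exchange_shadowing
    (T : Equiv.Perm ℝ) (D : Finset ℝ)
    (hD : ∀ d ∈ D, d ∈ Set.Ioo (0 : ℝ) 1)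
    (hrange : (⇑T) '' Set.Ico (0 : ℝ) 1 = Set.Ico (0 : ℝ) 1)
    (htrans : ∀ a ∈ Set.Ico (0 : ℝ) 1, ∀ b ∈ Set.Ico (0 : ℝ) 1,
      SameP D a b → T b - T a = b - a)
    (hmin : ∀ x ∈ Set.Ico (0 : ℝ) 1, ∀ y ∈ Set.Ico (0 : ℝ) 1, ∀ ε > (0 : ℝ),
      ∃ n : ℕ, |(⇑T)^[n] x - y| < ε)
    (x : ℝ) (hx : x ∈ Set.Ico (0 : ℝ) 1)
    (hxorb : ∀ d ∈ D, ∀ n : ℤ, (T ^ n) d ≠ x) :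
    ∃ n : ℕ → ℕ, StrictMono n ∧
      ∀ i, ∃ d ∈ D, ∃ σ : Bool, ∀ k : ℕ, k ≤ n i → ∃ ε > (0 : ℝ), ∀ y : ℝ,
        (if σ then d < y ∧ y < d + ε else d - ε < y ∧ y < d) →
        SameP D ((T ^ (-(n i : ℤ) + (k : ℤ))) x) ((T ^ (k : ℤ)) y) := by
  have hT : IsTranslationOnPieces T (Ico 0 1) D := htrans
  have hS : MapsTo T (Ico 0 1) (Ico 0 1) := (mapsTo_image T _).mono_right hrange.subset
  obtain ⟨d₀, hd₀⟩ := nonempty_of_isTranslationOnPieces_Ico hT hrange hmin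
  set u : ℕ → ℝ := fun m => (⇑T⁻¹)^[m] x
  have hu : ∀ m, u m ∈ Ico 0 1 := fun m =>
    (Equiv.Perm.mapsTo_inv_of_image_eq hrange).iterate m hx
  have hTu : ∀ m, T (u (m + 1)) = u m := fun m => by simp [u, Function.iterate_succ_apply']
  have hxu : ∀ m : ℕ, (T ^ (m : ℤ)) (u m) = x := fun m => by
    simp only [u]
    rw [← Equiv.Perm.zpow_neg_natCast_apply, zpow_neg]
    exact (T ^ (m : ℤ)).apply_symm_apply x
  have hDS : ∀ d ∈ D, d ∈ Ico (0 : ℝ) 1 := fun d hd => Ioo_subset_Ico_self (hD d hd)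
  have hpos : ∀ m, 0 < infDist (u m) D := fun m =>
    (D.isClosed.notMem_iff_infDist_pos ⟨d₀, hd₀⟩).1 fun hmem => hxorb _ hmem m (hxu m)
  have hrec : ∃ᶠ N in atTop, IsMinOn (fun m => infDist (u m) D) (Iic N) N :=
    frequently_isMinOn_Iic fun N =>
      hT.exists_infDist_lt hS (isBounded_Ico 0 1) hmin hd₀ (hDS d₀ hd₀) hu hTu (hpos N)
  obtain ⟨n, hn, hnmin⟩ := extraction_of_frequently_atTop hrec
  refine ⟨n, hn, fun i => ?_⟩
  obtain ⟨d, hd, σ, hσ⟩ :=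
    hT.exists_one_sided_sameP hS ordConnected_Ico hDS hu hTu (hnmin i) (hpos (n i))
  refine ⟨d, hd, σ, fun k hk => ?_⟩
  have hcast : -(n i : ℤ) + k = -((n i - k : ℕ) : ℤ) := by omega
  rw [hcast, zpow_natCast, ← Equiv.Perm.iterate_eq_pow, Equiv.Perm.zpow_neg_natCast_apply]
  exact hσ k hk
end
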